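/- Let b, c ∈ ℂ and let N ∈ ℕ satisfy (b)_N ≠ 0 and (c)_N ≠ 0. Then the following identity of polynomials in z holds (reflecting the same hypergeometric sum taken in the opposite direction): (c)_N · ∑_{k=0}^{N} ((−N)_k (b)_k / ((1−N−c)_k · k!)) z^k = (b)_N · ∑_{k=0}^{N} ((−N)_k (c)_k / ((1−N−b)_k · k!)) z^{N−k}. Equivalently, (c)_N · 2F1(−N, b; −c+1−N; z) = (b)_N · z^N · 2F1(−N, c; −b+1−N; 1/z). -/

import Mathlib

/-!
Write `(x)_k` for the rising factorial. For `k ≤ N` the reflection formula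
`(1 - N - c)_k · (c)_(N-k) = (-1)^k (c)_N` together with `(-N)_k = (-1)^k k! · C(N, k)` shows that
the `k`-th term of `(c)_N · ₂F₁(-N, b; 1 - N - c; z)` is `C(N, k) (b)_k (c)_(N-k) z^k`. This
expression is symmetric under `(b, k) ↔ (c, N - k)`, so reading the sum backwards gives the
`k`-th term of `(b)_N · z^N · ₂F₁(-N, c; 1 - N - b; 1/z)`.
-/

open Polynomial Finset

open scoped Nat

section CommRing

variable {R : Type*} [CommRing R]

theorem ascPochhammer_eval_add (x : R) (m n : ℕ) :
    (ascPochhammer R (m + n)).eval x =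
      (ascPochhammer R m).eval x * (ascPochhammer R n).eval (x + m) := by
  rw [← ascPochhammer_mul, eval_mul, eval_comp]
  simp

theorem ascPochhammer_eval_neg_natCast (N k : ℕ) :
    (ascPochhammer R k).eval (-(N : R)) = (-1) ^ k * (N.descFactorial k : R) := by
  rw [ascPochhammer_eval_neg_eq_descPochhammer, descPochhammer_eval_eq_descFactorial]

/-- `(1 - N - c)_k = (-1)^k (c + N - k)_k`, which completes `(c)_(N-k)` to `(c)_N`. -/
theorem ascPochhammer_eval_one_sub_sub_mul (c : R) {N k : ℕ} (hk : k ≤ N) :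
    (ascPochhammer R k).eval (1 - N - c) * (ascPochhammer R (N - k)).eval c =
      (-1) ^ k * (ascPochhammer R N).eval c := by
  have hshift : c + (N : R) - 1 - k + 1 = c + ((N - k : ℕ) : R) := by
    push_cast [Nat.cast_sub hk]
    ring
  rw [show (1 - N - c : R) = -(c + N - 1) by ring, ascPochhammer_eval_neg_eq_descPochhammer,
    descPochhammer_eval_eq_ascPochhammer, hshift, ← Nat.sub_add_cancel hk,
    ascPochhammer_eval_add c (N - k) k, Nat.add_sub_cancel]
  ac_rfl

end CommRing

section Field

variable {K : Type*} [Field K] [CharZero K]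

theorem ascPochhammer_eval_mul_hypergeometric_coeff (b c : K) {N k : ℕ} (hk : k ≤ N)
    (hc : (ascPochhammer K N).eval c ≠ 0) :
    (ascPochhammer K N).eval c *
        ((ascPochhammer K k).eval (-(N : K)) * (ascPochhammer K k).eval b /
          ((ascPochhammer K k).eval (1 - N - c) * k !)) =
      N.choose k * (ascPochhammer K k).eval b * (ascPochhammer K (N - k)).eval c := by
  have hreflect := ascPochhammer_eval_one_sub_sub_mul c hk
  have hden : (ascPochhammer K k).eval (1 - N - c) ≠ 0 :=
    left_ne_zero_of_mul (hreflect ▸ mul_ne_zero (pow_ne_zero _ (by norm_num)) hc)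
  have hfact : (k ! : K) ≠ 0 := Nat.cast_ne_zero.mpr k.factorial_ne_zero
  rw [ascPochhammer_eval_neg_natCast, Nat.descFactorial_eq_factorial_mul_choose]
  field_simp
  push_cast
  linear_combination (-(k ! * N.choose k * (ascPochhammer K k).eval b : K)) * hreflect

theorem ascPochhammer_eval_mul_hypergeometric_sum (b c : K) (N : ℕ) (e : ℕ → ℕ)
    (hc : (ascPochhammer K N).eval c ≠ 0) :
    C ((ascPochhammer K N).eval c) *
        ∑ k ∈ range (N + 1),
          C ((ascPochhammer K k).eval (-(N : K)) * (ascPochhammer K k).eval b /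
            ((ascPochhammer K k).eval (1 - N - c) * k !)) * X ^ e k =
      ∑ k ∈ range (N + 1),
        C (N.choose k * (ascPochhammer K k).eval b * (ascPochhammer K (N - k)).eval c) *
          X ^ e k := by
  rw [mul_sum]
  refine sum_congr rfl fun k hk => ?_
  rw [← mul_assoc, ← C_mul,
    ascPochhammer_eval_mul_hypergeometric_coeff b c (Nat.lt_succ_iff.mp (mem_range.mp hk)) hc]

end Field

/-- Reversal symmetry of hypergeometric polynomials:
`(c)_N · ₂F₁(-N, b; 1-N-c; z) = (b)_N · z^N · ₂F₁(-N, c; 1-N-b; 1/z)`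
as an identity of polynomials in `z`. -/
theorem stmt_7 (b c : ℂ) (N : ℕ)
    (hb : (ascPochhammer ℂ N).eval b ≠ 0)
    (hc : (ascPochhammer ℂ N).eval c ≠ 0) :
    Polynomial.C ((ascPochhammer ℂ N).eval c) *
        ∑ k ∈ Finset.range (N + 1),
          Polynomial.C ((ascPochhammer ℂ k).eval (-(N : ℂ)) * (ascPochhammer ℂ k).eval b /
            ((ascPochhammer ℂ k).eval (1 - (N : ℂ) - c) * (k.factorial : ℂ))) * Polynomial.X ^ k
      = Polynomial.C ((ascPochhammer ℂ N).eval b) *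
        ∑ k ∈ Finset.range (N + 1),
          Polynomial.C ((ascPochhammer ℂ k).eval (-(N : ℂ)) * (ascPochhammer ℂ k).eval c /
            ((ascPochhammer ℂ k).eval (1 - (N : ℂ) - b) * (k.factorial : ℂ))) *
            Polynomial.X ^ (N - k) := by
  rw [ascPochhammer_eval_mul_hypergeometric_sum b c N _ hc,
    ascPochhammer_eval_mul_hypergeometric_sum c b N _ hb, ← sum_range_reflect]
  refine sum_congr rfl fun k hk => ?_
  have hkN : k ≤ N := Nat.lt_succ_iff.mp (mem_range.mp hk)
  rw [Nat.add_sub_cancel, Nat.sub_sub_self hkN, Nat.choose_symm hkN,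
    mul_right_comm (N.choose k : ℂ)]
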